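/- Let n ≥ 1, let E = EuclideanSpace ℝ (Fin n), and let α and β be star partial homeomorphisms of E. Then α and β are Green H-equivalent — that is, there exist star partial homeomorphisms γ, δ, γ', δ' with β ≈ α.trans γ, α ≈ β.trans δ, β ≈ γ'.trans α and α ≈ δ'.trans β — if and only if α.source = β.source and α.target = β.target. -/

import Mathlib

noncomputable def radial {n : ℕ} (L : Set (EuclideanSpace ℝ (Fin n)))
    (u : EuclideanSpace ℝ (Fin n)) : ℝ :=
  sSup {c : ℝ | 0 ≤ c ∧ c • u ∈ L}

def IsStar {n : ℕ} (L : Set (EuclideanSpace ℝ (Fin n))) : Prop :=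
  IsCompact L ∧ (0 : EuclideanSpace ℝ (Fin n)) ∈ interior L ∧
    (∀ x ∈ L, segment ℝ 0 x ⊆ L) ∧
    ContinuousOn (radial L) (Metric.sphere (0 : EuclideanSpace ℝ (Fin n)) 1)

def IsStarPartialHomeo {n : ℕ}
    (α : PartialEquiv (EuclideanSpace ℝ (Fin n)) (EuclideanSpace ℝ (Fin n))) : Prop :=
  IsStar α.source ∧ IsStar α.target ∧
    ContinuousOn α α.source ∧ ContinuousOn α.symm α.target ∧
    α 0 = 0 ∧ ∀ x ∈ α.source, α '' (segment ℝ 0 x) = segment ℝ 0 (α x)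

/-!
Sources and targets can only shrink under composition, which gives the forward direction.
Conversely, star partial homeomorphisms are closed under inversion and under composition
when the target of the first map is the source of the second, so with equal sources and
targets one can take `γ = α.symm.trans β`, `γ' = β.trans α.symm`, and symmetrically for `δ, δ'`.
-/

namespace PartialEquiv

variable {α β γ : Type*}

theorem source_subset_of_eqOnSource_trans {e' : PartialEquiv α γ} {e : PartialEquiv α β}
    {f : PartialEquiv β γ} (h : e' ≈ e.trans f) : e'.source ⊆ e.source := by
  rw [h.source_eq, trans_source]
  exact Set.inter_subset_left

theorem target_subset_of_eqOnSource_trans {e' : PartialEquiv α γ} {f : PartialEquiv α β}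
    {e : PartialEquiv β γ} (h : e' ≈ f.trans e) : e'.target ⊆ e.target := by
  rw [h.target_eq, trans_target]
  exact Set.inter_subset_left

theorem trans_source_of_target_eq {e : PartialEquiv α β} {e' : PartialEquiv β γ}
    (h : e.target = e'.source) : (e.trans e').source = e.source := by
  rw [trans_source', h, Set.inter_self, ← h]
  exact Set.inter_eq_left.mpr e.mapsTo

theorem trans_target_of_target_eq {e : PartialEquiv α β} {e' : PartialEquiv β γ}
    (h : e.target = e'.source) : (e.trans e').target = e'.target := by
  rw [trans_target', ← h, Set.inter_self, h]
  exact Set.inter_eq_left.mpr e'.symm.mapsTo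

theorem eqOnSource_trans_symm_trans (e : PartialEquiv α β) {e' : PartialEquiv γ β}
    (h : e'.target ⊆ e.target) : e' ≈ (e'.trans e.symm).trans e := by
  calc e' = e'.restr (e' ⁻¹' e.target) :=
        (restr_eq_of_source_subset (e'.mapsTo.mono_right h)).symm
    _ = e'.trans (ofSet e.target) := (trans_ofSet e' _).symm
    _ ≈ e'.trans (e.symm.trans e) := EqOnSource.trans' (Setoid.refl _) (Setoid.symm (symm_trans_self e))
    _ = (e'.trans e.symm).trans e := (trans_assoc _ _ _).symm

theorem eqOnSource_self_trans_symm_trans (e : PartialEquiv α β) {e' : PartialEquiv α γ}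
    (h : e'.source ⊆ e.source) : e' ≈ e.trans (e.symm.trans e') := by
  simpa only [symm_symm, trans_symm_eq_symm_trans_symm] using
    (eqOnSource_trans_symm_trans e.symm (e' := e'.symm) h).symm'

end PartialEquiv

namespace IsStarPartialHomeo

variable {n : ℕ} {α β : PartialEquiv (EuclideanSpace ℝ (Fin n)) (EuclideanSpace ℝ (Fin n))}

theorem zero_mem_source (hα : IsStarPartialHomeo α) : 0 ∈ α.source :=
  interior_subset hα.1.2.1

theorem symm_map_zero (hα : IsStarPartialHomeo α) : α.symm 0 = 0 := by
  simpa only [hα.2.2.2.2.1] using α.left_inv hα.zero_mem_source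

theorem symm_image_segment (hα : IsStarPartialHomeo α) {x : EuclideanSpace ℝ (Fin n)}
    (hx : x ∈ α.target) : α.symm '' segment ℝ 0 x = segment ℝ 0 (α.symm x) := by
  have hx' := α.map_target hx
  calc α.symm '' segment ℝ 0 x = α.symm '' (α '' segment ℝ 0 (α.symm x)) := by
        rw [hα.2.2.2.2.2 _ hx', α.right_inv hx]
    _ = segment ℝ 0 (α.symm x) := α.symm_image_image_of_subset_source (hα.1.2.2.1 _ hx')

protected theorem symm (hα : IsStarPartialHomeo α) : IsStarPartialHomeo α.symm :=
  ⟨hα.2.1, hα.1, hα.2.2.2.1, α.symm_symm ▸ hα.2.2.1, hα.symm_map_zero,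
    fun _ hx => hα.symm_image_segment hx⟩

protected theorem trans (hα : IsStarPartialHomeo α) (hβ : IsStarPartialHomeo β)
    (h : α.target = β.source) : IsStarPartialHomeo (α.trans β) := by
  obtain ⟨hαS, -, hαc, hαc', hα0, hαseg⟩ := hα
  obtain ⟨-, hβT, hβc, hβc', hβ0, hβseg⟩ := hβ
  have hs := PartialEquiv.trans_source_of_target_eq h
  have ht := PartialEquiv.trans_target_of_target_eq h
  refine ⟨hs ▸ hαS, ht ▸ hβT, ?_, ?_, ?_, ?_⟩
  · rw [hs, PartialEquiv.coe_trans]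
    exact hβc.comp hαc (h ▸ α.mapsTo)
  · rw [ht, PartialEquiv.coe_trans_symm]
    exact hαc'.comp hβc' (h ▸ β.symm.mapsTo)
  · rw [PartialEquiv.trans_apply, hα0, hβ0]
  · intro x hx
    rw [hs] at hx
    rw [PartialEquiv.coe_trans, Set.image_comp, hαseg x hx, Function.comp_apply,
      hβseg _ (h ▸ α.map_source hx)]

end IsStarPartialHomeo

theorem stmt_11_general (n : ℕ)
    (α β : PartialEquiv (EuclideanSpace ℝ (Fin n)) (EuclideanSpace ℝ (Fin n)))
    (hα : IsStarPartialHomeo α) (hβ : IsStarPartialHomeo β) :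
    (∃ γ δ γ' δ' : PartialEquiv (EuclideanSpace ℝ (Fin n)) (EuclideanSpace ℝ (Fin n)),
        IsStarPartialHomeo γ ∧ IsStarPartialHomeo δ ∧
        IsStarPartialHomeo γ' ∧ IsStarPartialHomeo δ' ∧
        β ≈ α.trans γ ∧ α ≈ β.trans δ ∧ β ≈ γ'.trans α ∧ α ≈ δ'.trans β) ↔
      α.source = β.source ∧ α.target = β.target := by
  open PartialEquiv in
  constructor
  · rintro ⟨γ, δ, γ', δ', -, -, -, -, hβα, hαβ, hβα', hαβ'⟩
    exact ⟨(source_subset_of_eqOnSource_trans hαβ).antisymm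
        (source_subset_of_eqOnSource_trans hβα),
      (target_subset_of_eqOnSource_trans hαβ').antisymm
        (target_subset_of_eqOnSource_trans hβα')⟩
  · rintro ⟨hs, ht⟩
    exact ⟨α.symm.trans β, β.symm.trans α, β.trans α.symm, α.trans β.symm,
      hα.symm.trans hβ hs, hβ.symm.trans hα hs.symm,
      hβ.trans hα.symm ht.symm, hα.trans hβ.symm ht,
      α.eqOnSource_self_trans_symm_trans hs.ge, β.eqOnSource_self_trans_symm_trans hs.le,
      α.eqOnSource_trans_symm_trans ht.ge, β.eqOnSource_trans_symm_trans ht.le⟩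

theorem stmt_11 (n : ℕ) (hn : 1 ≤ n)
    (α β : PartialEquiv (EuclideanSpace ℝ (Fin n)) (EuclideanSpace ℝ (Fin n)))
    (hα : IsStarPartialHomeo α) (hβ : IsStarPartialHomeo β) :
    (∃ γ δ γ' δ' : PartialEquiv (EuclideanSpace ℝ (Fin n)) (EuclideanSpace ℝ (Fin n)),
        IsStarPartialHomeo γ ∧ IsStarPartialHomeo δ ∧
        IsStarPartialHomeo γ' ∧ IsStarPartialHomeo δ' ∧
        β ≈ α.trans γ ∧ α ≈ β.trans δ ∧ β ≈ γ'.trans α ∧ α ≈ δ'.trans β) ↔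
      α.source = β.source ∧ α.target = β.target :=
  stmt_11_general n α β hα hβ
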